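/- Assume Ω_T is positive definite and let J̌ > 0. Let w₁ ∈ ℝ^L satisfy the information constraint J(w₁) ≥ J̌ and minimize the energy cost subject to the information constraint, i.e. P(w₁) ≤ P(w) for every w ∈ ℝ^L with J(w) ≥ J̌. Then w₁ solves the energy constrained problem with budget P̂ = P(w₁): for every w ∈ ℝ^L with P(w) ≤ P(w₁) one has J(w) ≤ J(w₁). (Second direction of Proposition 2.) -/

import Mathlib

/-!
If `w` had strictly larger Fisher information than `w₁`, shrink it: along the ray `s ↦ √s • w`
the information is `s N / (s D + ξ²)`, which equals `J̌` at `s = J̌ ξ² / (N - J̌ D) ∈ (0, 1)`.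
The shrunk vector is then feasible for the information constrained problem, and since `Ω_T` is
positive definite and scaling preserves the support, it is strictly cheaper than `w`, hence
than `w₁`, contradicting the optimality of `w₁`.
-/

open Matrix BigOperators

theorem Matrix.smul_dotProduct_mulVec_smul {ι R : Type*} [Fintype ι] [CommSemiring R]
    (M : Matrix ι ι R) (t : R) (w : ι → R) :
    (t • w) ⬝ᵥ M *ᵥ (t • w) = t ^ 2 * (w ⬝ᵥ M *ᵥ w) := by
  rw [mulVec_smul, smul_dotProduct, dotProduct_smul, smul_smul, smul_eq_mul, sq]

theorem sum_ite_smul_eq_zero {ι R M β : Type*} [Fintype ι] [Semiring R] [IsCancelMulZero R]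
    [AddCommMonoid M] [DecidableEq M] [Module R M] [Module.IsTorsionFree R M] [AddCommMonoid β]
    (c : ι → β) {t : R} (ht : t ≠ 0) (w : ι → M) :
    (∑ l, if (t • w) l = 0 then 0 else c l) = ∑ l, if w l = 0 then 0 else c l := by
  simp only [Pi.smul_apply, smul_eq_zero_iff_right ht]

theorem exists_mem_Ioo_mul_div_mul_add_eq {N D ξ j : ℝ} (hD : 0 ≤ D) (hξ : 0 < ξ) (hj : 0 < j)
    (hjN : j < N / (D + ξ)) : ∃ s ∈ Set.Ioo (0 : ℝ) 1, s * N / (s * D + ξ) = j := by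
  have hDξ : 0 < D + ξ := by linarith
  have hA : j * ξ < N - j * D := by
    have := (lt_div_iff₀ hDξ).mp hjN
    linarith
  have hA₀ : 0 < N - j * D := lt_trans (by positivity) hA
  refine ⟨j * ξ / (N - j * D), ⟨by positivity, (div_lt_one hA₀).mpr hA⟩, ?_⟩
  have hden : 0 < j * ξ / (N - j * D) * D + ξ := by positivity
  rw [div_eq_iff hden.ne']
  field_simp
  ring

theorem Matrix.PosDef.quadForm_add_support_cost_smul_lt {ι : Type*} [Fintype ι] {Ω : Matrix ι ι ℝ}
    (hΩ : Ω.PosDef) (c : ι → ℝ) {w : ι → ℝ} (hw : w ≠ 0) {t : ℝ} (ht₀ : 0 < t) (ht₁ : t < 1) :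
    (t • w) ⬝ᵥ Ω *ᵥ (t • w) + (∑ l, if (t • w) l = 0 then 0 else c l) <
      w ⬝ᵥ Ω *ᵥ w + ∑ l, if w l = 0 then 0 else c l := by
  have hQ : 0 < w ⬝ᵥ Ω *ᵥ w := by simpa using hΩ.dotProduct_mulVec_pos hw
  rw [Ω.smul_dotProduct_mulVec_smul, sum_ite_smul_eq_zero c ht₀.ne']
  have ht₂ : t ^ 2 < 1 := by nlinarith
  nlinarith

theorem information_constrained_solves_energy_constrained_general
    {L : ℕ}
    (ΩJN ΩJD ΩT : Matrix (Fin L) (Fin L) ℝ)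
    (hJD : ΩJD.PosSemidef) (hT : ΩT.PosDef)
    (ξsq : ℝ) (hξ : 0 < ξsq)
    (c : Fin L → ℝ)
    (Jcheck : ℝ) (hJcheck : 0 < Jcheck)
    (J P : (Fin L → ℝ) → ℝ)
    (hJ : ∀ w, J w = (w ⬝ᵥ ΩJN.mulVec w) / (w ⬝ᵥ ΩJD.mulVec w + ξsq))
    (hP : ∀ w, P w = w ⬝ᵥ ΩT.mulVec w + ∑ l, if w l = 0 then 0 else c l)
    (w₁ : Fin L → ℝ)
    (hfeas : Jcheck ≤ J w₁)
    (hopt : ∀ w, Jcheck ≤ J w → P w₁ ≤ P w) :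
    ∀ w, P w ≤ P w₁ → J w ≤ J w₁ := by
  intro w hPw
  by_contra! hlt
  have hw : w ≠ 0 := by
    rintro rfl
    rw [hJ 0, zero_dotProduct, zero_div] at hlt
    linarith
  have hD : 0 ≤ w ⬝ᵥ ΩJD *ᵥ w := by simpa using hJD.dotProduct_mulVec_nonneg w
  obtain ⟨s, ⟨hs₀, hs₁⟩, hs⟩ := exists_mem_Ioo_mul_div_mul_add_eq hD hξ hJcheck
    ((hfeas.trans_lt hlt).trans_eq (hJ w))
  have hts : √s ^ 2 = s := Real.sq_sqrt hs₀.le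
  have hJt : J (√s • w) = Jcheck := by
    rw [hJ, smul_dotProduct_mulVec_smul, smul_dotProduct_mulVec_smul, hts, hs]
  have hcheaper := hT.quadForm_add_support_cost_smul_lt c hw (Real.sqrt_pos.2 hs₀)
    ((Real.sqrt_lt_sqrt hs₀.le hs₁).trans_eq Real.sqrt_one)
  have hopt_t := hopt _ hJt.ge
  rw [hP, hP] at hopt_t hPw
  linarith

/-- second direction of Proposition 2: a minimizer of the energy
cost subject to the information constraint solves the energy constrained
problem with budget `P w₁`. -/
theorem information_constrained_solves_energy_constrained
    {L : ℕ} (hL : 0 < L)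
    (ΩJN ΩJD ΩT : Matrix (Fin L) (Fin L) ℝ)
    (hJN : ΩJN.PosSemidef) (hJD : ΩJD.PosSemidef) (hT : ΩT.PosDef)
    (ξsq : ℝ) (hξ : 0 < ξsq)
    (c : Fin L → ℝ) (hc : ∀ l, 0 ≤ c l)
    (Jcheck : ℝ) (hJcheck : 0 < Jcheck)
    (J P : (Fin L → ℝ) → ℝ)
    (hJ : ∀ w, J w = (w ⬝ᵥ ΩJN.mulVec w) / (w ⬝ᵥ ΩJD.mulVec w + ξsq))
    (hP : ∀ w, P w = w ⬝ᵥ ΩT.mulVec w + ∑ l, if w l = 0 then 0 else c l)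
    (w₁ : Fin L → ℝ)
    (hfeas : Jcheck ≤ J w₁)
    (hopt : ∀ w, Jcheck ≤ J w → P w₁ ≤ P w) :
    ∀ w, P w ≤ P w₁ → J w ≤ J w₁ :=
  information_constrained_solves_energy_constrained_general ΩJN ΩJD ΩT hJD hT ξsq hξ c Jcheck
    hJcheck J P hJ hP w₁ hfeas hopt
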